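/- A matroid M is weakly round if there is no pair of sets A, B with A ∪ B = E(M), r_M(A) ≤ r(M) − 1 and r_M(B) ≤ r(M) − 2. Prove: if M is weakly round and e ∈ E(M) is a nonloop, then M/e is weakly round. -/

import Mathlib

open Set Matroid
open scoped Matroid

namespace MatroidDHJ

variable {α β : Type*}

/-- The rank of a set in a matroid, as an extended natural number. -/
noncomputable def er (M : Matroid α) (X : Set α) : ℕ∞ :=
  ⨆ I : {I : Set α // M.Indep I ∧ I ⊆ X}, (I : Set α).encard

/-- The rank of a set, as a natural number. -/
noncomputable def r (M : Matroid α) (X : Set α) : ℕ := (er M X).toNat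

/-- The rank of a matroid. -/
noncomputable def rk (M : Matroid α) : ℕ := r M M.E

/-- Deletion of a set from a matroid. -/
def delete (M : Matroid α) (D : Set α) : Matroid α := M ↾ (M.E \ D)

/-- Contraction of a set in a matroid. -/
def contract (M : Matroid α) (C : Set α) : Matroid α := (delete M✶ C)✶

/-- `N` is a minor of `M` if it is obtained by a contraction followed by a deletion. -/
def IsMinor (N M : Matroid α) : Prop := ∃ C D, delete (contract M C) D = N

/-- A matroid is simple if every set of at most two elements of the ground set
is independent. -/
def Simple (M : Matroid α) : Prop := ∀ I ⊆ M.E, I.encard ≤ 2 → M.Indep I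

/-- `M` has a `U_{2,n}`-minor iff it has a minor that is a simple rank-2 matroid
on `n` elements. -/
def HasU2Minor (M : Matroid α) (n : ℕ) : Prop :=
  ∃ N, IsMinor N M ∧ Simple N ∧ er N N.E = 2 ∧ N.E.encard = n

/-- A point of a matroid is a rank-one flat. -/
def Point (M : Matroid α) (P : Set α) : Prop := M.IsFlat P ∧ er M P = 1

/-- `ε M` is the number of points of `M`. -/
noncomputable def eps (M : Matroid α) : ℕ := {P | Point M P}.ncard

/-- A representation of a matroid over a field `F`: an assignment of vectors to
the elements so that independence coincides with linear independence. -/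
def Rep (M : Matroid α) (F : Type) [Field F] : Prop :=
  ∃ (n : ℕ) (φ : α → (Fin n → F)),
    ∀ I ⊆ M.E, (M.Indep I ↔ LinearIndependent F fun x : I => φ x)

/-- Representability over the field with `q` elements (`q` a prime power). -/
def RepGF (M : Matroid α) (q : ℕ) : Prop :=
  ∃ (F : Type) (hF : Field F) (hfin : Fintype F),
    @Fintype.card F hfin = q ∧ @Rep _ M F hF

/-- `M` is (isomorphic to) the projective geometry `PG(n-1,q)`: a simple
`GF(q)`-representable matroid of rank `n` with `(q^n - 1)/(q - 1)` elements. -/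
def IsPG (M : Matroid α) (n q : ℕ) : Prop :=
  Simple M ∧ RepGF M q ∧ M.E.Finite ∧ rk M = n ∧ (q - 1) * M.E.ncard = q ^ n - 1

/-- A hyperplane of a matroid: a flat whose rank is one less than that of `M`. -/
def Hyperplane (M : Matroid α) (H : Set α) : Prop := M.IsFlat H ∧ r M H + 1 = rk M

/-- An isomorphism between matroids on different ground types. -/
def IsIsoTo (M : Matroid α) (N : Matroid β) : Prop :=
  ∃ e : M.E ≃ N.E, ∀ I : Set M.E,
    M.Indep ((↑) '' I) ↔ N.Indep ((↑) '' (e '' I))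

/-- `M` is (isomorphic to) the affine geometry `AG(n-1,q)`: the deletion of a
hyperplane from `PG(n-1,q)`. -/
def IsAG (M : Matroid α) (n q : ℕ) : Prop :=
  ∃ (P : Matroid ℕ) (H : Set ℕ), IsPG P n q ∧ Hyperplane P H ∧
    IsIsoTo (delete P H) M

/-- `F` is a witnessing family for `S` being a `(q,h,t)`-stack. -/
def StackWitness (S : Matroid α) (q h t : ℕ) (F : Fin h → Set α) : Prop :=
  (∀ i, F i ⊆ S.E) ∧ Pairwise (Function.onFun Disjoint F) ∧
    S.E ⊆ S.closure (⋃ i, F i) ∧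
    ∀ i : Fin h,
      er (contract S (⋃ j ∈ {j | j < i}, F j) ↾ F i) (F i) ≤ t ∧
      ¬ RepGF (contract S (⋃ j ∈ {j | j < i}, F j) ↾ F i) q

/-- `S` is a `(q,h,t)`-stack. -/
def IsStack (S : Matroid α) (q h t : ℕ) : Prop := ∃ F, StackWitness S q h t F

/-- A matroid is weakly round if no two sets of ranks at most `r(M)-1` and
`r(M)-2` respectively have union the ground set. -/
def WeaklyRound (M : Matroid α) : Prop :=
  ¬ ∃ A B : Set α, A ∪ B = M.E ∧ r M A + 1 ≤ rk M ∧ r M B + 2 ≤ rk M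


/-- `N` is a simplification of `M`: a restriction of `M` to a set of nonloops
containing exactly one element of each point of `M`. -/
def IsSimplification (N M : Matroid α) : Prop :=
  ∃ S ⊆ M.E, N = M ↾ S ∧ (∀ e ∈ S, er M {e} = 1) ∧
    ∀ P, Point M P → ∃! e, e ∈ S ∩ P

end MatroidDHJ

open MatroidDHJ
open scoped Matroid

/-!
Contracting a finite independent set `I` lowers the rank of every set by exactly `|I|`
once `I` is added back: `r_M(X ∪ I) = r_{M/I}(X) + |I|`. So a cover `A ∪ B` of `E(M/I)` violating
weak roundness of `M/I` lifts to the cover `(A ∪ I) ∪ (B ∪ I)` of `E(M)` violating weak roundness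
of `M`.
-/

namespace Matroid

variable {α : Type*} {M : Matroid α} {I X : Set α}

lemma Indep.eRk_contract_add_encard (hI : M.Indep I) (hX : X ⊆ (M ／ I).E) :
    (M ／ I).eRk X + I.encard = M.eRk (X ∪ I) := by
  obtain ⟨J, hJ⟩ := (M ／ I).exists_isBasis X
  have hJI : Disjoint J I := (hI.contract_indep_iff.1 hJ.indep).1
  rw [hJ.eRk_eq_encard, (hI.union_isBasis_union_of_contract_isBasis hJ).eRk_eq_encard,
    encard_union_eq hJI]

end Matroid

namespace MatroidDHJ

variable {α : Type*} {M : Matroid α} {I X : Set α}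

lemma er_eq_eRk (M : Matroid α) (X : Set α) : er M X = M.eRk X := by
  refine le_antisymm (iSup_le fun J ↦ J.2.1.encard_le_eRk_of_subset J.2.2) ?_
  obtain ⟨J, hJ⟩ := M.exists_isBasis' X
  rw [hJ.eRk_eq_encard]
  exact le_iSup (fun J : {J : Set α // M.Indep J ∧ J ⊆ X} ↦ (J : Set α).encard)
    ⟨J, hJ.indep, hJ.subset⟩

/-- `rk` truncates an infinite rank to `0`. -/
lemma rankFinite_of_rk_ne_zero (h : rk M ≠ 0) : M.RankFinite := by
  rw [← eRank_ne_top_iff]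
  intro htop
  simp [rk, r, er_eq_eRk, eRk_ground, htop] at h

lemma r_union_of_indep [(M ／ I).RankFinite] (hI : M.Indep I) (hIfin : I.Finite)
    (hX : X ⊆ (M ／ I).E) : r M (X ∪ I) = r (M ／ I) X + I.ncard := by
  rw [r, r, er_eq_eRk, er_eq_eRk, ← hI.eRk_contract_add_encard hX, ENat.toNat_add
    (RankFinite.isRkFinite X).eRk_lt_top.ne hIfin.encard_lt_top.ne, ncard_def]

theorem WeaklyRound.contract_of_indep (h : WeaklyRound M) (hI : M.Indep I) (hIfin : I.Finite) :
    WeaklyRound (M ／ I) := by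
  rintro ⟨A, B, hAB, hA, hB⟩
  have : (M ／ I).RankFinite := rankFinite_of_rk_ne_zero (by omega)
  have hAE : A ⊆ (M ／ I).E := hAB ▸ subset_union_left
  have hBE : B ⊆ (M ／ I).E := hAB ▸ subset_union_right
  have hrk : rk M = rk (M ／ I) + I.ncard := by
    rw [rk, rk, ← r_union_of_indep hI hIfin Subset.rfl, contract_ground,
      sdiff_union_of_subset hI.subset_ground]
  refine h ⟨A ∪ I, B ∪ I, ?_, ?_, ?_⟩
  · rw [← union_union_distrib_right, hAB, contract_ground, sdiff_union_of_subset hI.subset_ground]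
  · rw [r_union_of_indep hI hIfin hAE]; omega
  · rw [r_union_of_indep hI hIfin hBE]; omega

end MatroidDHJ

theorem weaklyRound_contract_general {α : Type*} (M : Matroid α)
    (hWR : WeaklyRound M) (e : α) (hne : M.Indep {e}) :
    WeaklyRound (MatroidDHJ.contract M {e}) :=
  -- `MatroidDHJ.contract M {e}` is definitionally Mathlib's `M ／ {e}`.
  hWR.contract_of_indep hne (finite_singleton e)

theorem weaklyRound_contract {α : Type*} (M : Matroid α) (hfin : M.E.Finite)
    (hWR : WeaklyRound M) (e : α) (he : e ∈ M.E) (hne : M.Indep {e}) :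
    WeaklyRound (MatroidDHJ.contract M {e}) :=
  weaklyRound_contract_general M hWR e hne
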